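/- In the algebra of sequents S, every element a satisfies contraction: if (Γ, A, A ⊢ B) ∈ a then (Γ, A ⊢ B) ∈ a. -/

import Mathlib

/-! Syntax of first-order deduction modulo: terms and formulas. -/

/-- First-order terms: variables, constants, and (applicative) application. -/
inductive Tm : Type
  | var : Nat → Tm
  | fn  : Nat → Tm
  | app : Tm → Tm → Tm

/-- Formulas of (many-sorted collapsed to one-sorted) predicate logic. -/
inductive Fm : Type
  | atom : Nat → Tm → Fm
  | top  : Fm
  | bot  : Fm
  | imp  : Fm → Fm → Fm
  | and  : Fm → Fm → Fm
  | or   : Fm → Fm → Fm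
  | all  : Nat → Fm → Fm
  | ex   : Nat → Fm → Fm

/-- Simultaneous substitution on terms. -/
def Tm.subst (σ : Nat → Tm) : Tm → Tm
  | var n => σ n
  | fn n => fn n
  | app t u => app (t.subst σ) (u.subst σ)

/-- Simultaneous substitution on formulas (binders block the substitution of
their variable). -/
def Fm.subst (σ : Nat → Tm) : Fm → Fm
  | atom p t => atom p (t.subst σ)
  | top => top
  | bot => bot
  | imp A B => imp (A.subst σ) (B.subst σ)
  | and A B => and (A.subst σ) (B.subst σ)
  | or A B => or (A.subst σ) (B.subst σ)
  | all x A => all x (A.subst (Function.update σ x (Tm.var x)))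
  | ex x A => ex x (A.subst (Function.update σ x (Tm.var x)))

/-- The substitution `(t/x)A`. -/
def subst1 (t : Tm) (x : Nat) (A : Fm) : Fm :=
  A.subst (Function.update Tm.var x t)

/-- Free variables of a term. -/
def Tm.fv : Tm → Set Nat
  | var n => {n}
  | fn _ => ∅
  | app t u => t.fv ∪ u.fv

/-- Free variables of a formula. -/
def Fm.fv : Fm → Set Nat
  | atom _ t => t.fv
  | top => ∅
  | bot => ∅
  | imp A B => A.fv ∪ B.fv
  | and A B => A.fv ∪ B.fv
  | or A B => A.fv ∪ B.fv
  | all x A => A.fv \ {x}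
  | ex x A => A.fv \ {x}

/-! Natural deduction modulo a congruence `R`, and its neutral / cut-free
proofs.  A sequent is a pair of a context (a list of formulas) and a formula;
`Γ, A` is represented by `Γ ++ [A]`. -/

mutual
  /-- `NCF R Γ A`: the sequent `Γ ⊢ A` has a neutral cut-free proof in natural
  deduction modulo `R`, i.e. a cut-free proof ending with the axiom rule or an
  elimination rule. -/
  inductive NCF (R : Fm → Fm → Prop) : List Fm → Fm → Prop
    | ax {Γ A B} : A ∈ Γ → R B A → NCF R Γ B
    | impE {Γ A B C} : NCF R Γ C → CF R Γ A → R C (Fm.imp A B) → NCF R Γ B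
    | andE1 {Γ A B C} : NCF R Γ C → R C (Fm.and A B) → NCF R Γ A
    | andE2 {Γ A B C} : NCF R Γ C → R C (Fm.and A B) → NCF R Γ B
    | orE {Γ A B C D} : NCF R Γ D → CF R (Γ ++ [A]) C → CF R (Γ ++ [B]) C →
        R D (Fm.or A B) → NCF R Γ C
    | botE {Γ A B} : NCF R Γ B → R B Fm.bot → NCF R Γ A
    | allE {Γ A B C x t} : NCF R Γ B → R B (Fm.all x A) → R C (subst1 t x A) →
        NCF R Γ C
    | exE {Γ A B C x} : NCF R Γ C → CF R (Γ ++ [A]) B → R C (Fm.ex x A) →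
        (∀ D ∈ Γ, x ∉ D.fv) → x ∉ B.fv → NCF R Γ B

  /-- `CF R Γ A`: the sequent `Γ ⊢ A` has a cut-free proof in natural deduction
  modulo `R`: it ends with the axiom rule, or with an introduction rule whose
  premises have cut-free proofs, or with an elimination rule whose major
  premise has a neutral cut-free proof and whose other premises have cut-free
  proofs. -/
  inductive CF (R : Fm → Fm → Prop) : List Fm → Fm → Prop
    | neutral {Γ A} : NCF R Γ A → CF R Γ A
    | topI {Γ A} : R A Fm.top → CF R Γ A
    | impI {Γ A B C} : CF R (Γ ++ [A]) B → R C (Fm.imp A B) → CF R Γ C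
    | andI {Γ A B C} : CF R Γ A → CF R Γ B → R C (Fm.and A B) → CF R Γ C
    | orI1 {Γ A B C} : CF R Γ A → R C (Fm.or A B) → CF R Γ C
    | orI2 {Γ A B C} : CF R Γ B → R C (Fm.or A B) → CF R Γ C
    | allI {Γ A B x} : CF R Γ A → R B (Fm.all x A) → (∀ D ∈ Γ, x ∉ D.fv) →
        CF R Γ B
    | exI {Γ A B C x t} : CF R Γ C → R C (subst1 t x A) → R B (Fm.ex x A) →
        CF R Γ B
end

/-- A sequent `Γ ⊢ A`. -/
abbrev Sequent : Type := List Fm × Fm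

/-! The operations of the algebra of sequents. -/

/-- `⊤̃`: sequents with a neutral cut-free proof or whose conclusion is
congruent to `⊤`. -/
def tTop (R : Fm → Fm → Prop) : Set Sequent :=
  {s | NCF R s.1 s.2 ∨ R s.2 Fm.top}

/-- `⊥̃`: sequents with a neutral cut-free proof. -/
def tBot (R : Fm → Fm → Prop) : Set Sequent :=
  {s | NCF R s.1 s.2}

/-- `a ∧̃ b`. -/
def tAnd (R : Fm → Fm → Prop) (a b : Set Sequent) : Set Sequent :=
  {s | NCF R s.1 s.2 ∨
    ∃ A B, R s.2 (Fm.and A B) ∧ (s.1, A) ∈ a ∧ (s.1, B) ∈ b}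

/-- `a ∨̃ b`. -/
def tOr (R : Fm → Fm → Prop) (a b : Set Sequent) : Set Sequent :=
  {s | NCF R s.1 s.2 ∨
    ∃ A B, R s.2 (Fm.or A B) ∧ ((s.1, A) ∈ a ∨ (s.1, B) ∈ b)}

/-- `a ⇒̃ b`. -/
def tImp (R : Fm → Fm → Prop) (a b : Set Sequent) : Set Sequent :=
  {s | NCF R s.1 s.2 ∨
    ∃ A B, R s.2 (Fm.imp A B) ∧
      ∀ Θ : List Fm, (s.1 ++ Θ, A) ∈ a → (s.1 ++ Θ, B) ∈ b}

/-- `∀̃ E`. -/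
def tAll (R : Fm → Fm → Prop) (E : Set (Set Sequent)) : Set Sequent :=
  {s | NCF R s.1 s.2 ∨
    ∃ x A, R s.2 (Fm.all x A) ∧ ∀ t : Tm, ∀ a ∈ E, (s.1, subst1 t x A) ∈ a}

/-- `∃̃ E`. -/
def tEx (R : Fm → Fm → Prop) (E : Set (Set Sequent)) : Set Sequent :=
  {s | NCF R s.1 s.2 ∨
    ∃ x A, R s.2 (Fm.ex x A) ∧ ∃ t : Tm, ∃ a ∈ E, (s.1, subst1 t x A) ∈ a}

/-- The algebra of sequents: `InS R a` means `a` belongs to the smallest set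
`S` of sets of sequents closed under `⊤̃`, `⊥̃`, `∧̃`, `∨̃`, `⇒̃`, `∀̃`, `∃̃` and
arbitrary intersections. -/
inductive InS (R : Fm → Fm → Prop) : Set Sequent → Prop
  | top : InS R (tTop R)
  | bot : InS R (tBot R)
  | and {a b} : InS R a → InS R b → InS R (tAnd R a b)
  | or {a b} : InS R a → InS R b → InS R (tOr R a b)
  | imp {a b} : InS R a → InS R b → InS R (tImp R a b)
  | all {E} : (∀ a ∈ E, InS R a) → InS R (tAll R E)
  | ex {E} : (∀ a ∈ E, InS R a) → InS R (tEx R E)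
  | inter {E} : (∀ a ∈ E, InS R a) → InS R (⋂₀ E)

/-! Neither cut-free provability nor membership in an element of `S` can distinguish two
contexts with the same members: the only rules that inspect the context are the axiom rule
and the eigenvariable conditions, both of which read it as a set. Contraction is the instance
`Γ, A, A` versus `Γ, A`. -/

theorem mem_append_right_iff_of_mem_iff {Γ Δ : List Fm} (h : ∀ C, C ∈ Γ ↔ C ∈ Δ)
    (Θ : List Fm) (C : Fm) : C ∈ Γ ++ Θ ↔ C ∈ Δ ++ Θ := by
  simp only [List.mem_append, h C]

mutual

theorem NCF.of_mem_iff {R : Fm → Fm → Prop} {Γ Δ : List Fm} {B : Fm}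
    (h : ∀ C, C ∈ Γ ↔ C ∈ Δ) : NCF R Γ B → NCF R Δ B
  | .ax hA hr => .ax ((h _).1 hA) hr
  | .impE hC hA hr => .impE (hC.of_mem_iff h) (hA.of_mem_iff h) hr
  | .andE1 hC hr => .andE1 (hC.of_mem_iff h) hr
  | .andE2 hC hr => .andE2 (hC.of_mem_iff h) hr
  | .orE hD hA hB hr => .orE (hD.of_mem_iff h)
      (hA.of_mem_iff (mem_append_right_iff_of_mem_iff h _))
      (hB.of_mem_iff (mem_append_right_iff_of_mem_iff h _)) hr
  | .botE hB hr => .botE (hB.of_mem_iff h) hr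
  | .allE hB hr hs => .allE (hB.of_mem_iff h) hr hs
  | .exE hC hB hr hfv hx => .exE (hC.of_mem_iff h)
      (hB.of_mem_iff (mem_append_right_iff_of_mem_iff h _)) hr
      (fun D hD => hfv D ((h D).2 hD)) hx

theorem CF.of_mem_iff {R : Fm → Fm → Prop} {Γ Δ : List Fm} {B : Fm}
    (h : ∀ C, C ∈ Γ ↔ C ∈ Δ) : CF R Γ B → CF R Δ B
  | .neutral hB => .neutral (hB.of_mem_iff h)
  | .topI hr => .topI hr
  | .impI hB hr => .impI (hB.of_mem_iff (mem_append_right_iff_of_mem_iff h _)) hr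
  | .andI hA hB hr => .andI (hA.of_mem_iff h) (hB.of_mem_iff h) hr
  | .orI1 hA hr => .orI1 (hA.of_mem_iff h) hr
  | .orI2 hB hr => .orI2 (hB.of_mem_iff h) hr
  | .allI hA hr hfv => .allI (hA.of_mem_iff h) hr (fun D hD => hfv D ((h D).2 hD))
  | .exI hC hs hr => .exI (hC.of_mem_iff h) hs hr

end

theorem InS.mem_of_mem_iff {R : Fm → Fm → Prop} {a : Set Sequent} (ha : InS R a)
    {Γ Δ : List Fm} (h : ∀ C, C ∈ Γ ↔ C ∈ Δ) {B : Fm} (hΓ : (Γ, B) ∈ a) :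
    (Δ, B) ∈ a := by
  induction ha generalizing Γ Δ B with
  | top => exact hΓ.imp (NCF.of_mem_iff h) id
  | bot => exact NCF.of_mem_iff h hΓ
  | and _ _ iha ihb =>
    exact hΓ.imp (NCF.of_mem_iff h) fun ⟨A, A', hr, hA, hA'⟩ =>
      ⟨A, A', hr, iha h hA, ihb h hA'⟩
  | or _ _ iha ihb =>
    exact hΓ.imp (NCF.of_mem_iff h) fun ⟨A, A', hr, hAA'⟩ =>
      ⟨A, A', hr, hAA'.imp (iha h) (ihb h)⟩
  | imp _ _ iha ihb =>
    refine hΓ.imp (NCF.of_mem_iff h) fun ⟨A, A', hr, himp⟩ => ⟨A, A', hr, fun Θ hA => ?_⟩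
    have hΘ := mem_append_right_iff_of_mem_iff h Θ
    exact ihb hΘ (himp Θ (iha (fun C => (hΘ C).symm) hA))
  | all _ ihE =>
    exact hΓ.imp (NCF.of_mem_iff h) fun ⟨x, A, hr, hA⟩ =>
      ⟨x, A, hr, fun t b hb => ihE b hb h (hA t b hb)⟩
  | ex _ ihE =>
    exact hΓ.imp (NCF.of_mem_iff h) fun ⟨x, A, hr, t, b, hb, hA⟩ =>
      ⟨x, A, hr, t, b, hb, ihE b hb h hA⟩
  | inter _ ihE => exact fun b hb => ihE b hb h (hΓ b hb)

/-- Every element of the algebra of sequents admits contraction: if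
`(Γ, A, A ⊢ B)` belongs to `a ∈ S` then so does `(Γ, A ⊢ B)`.
(Third point of Proposition `prop:basics`.) -/
theorem InS.contraction {R : Fm → Fm → Prop} (hR : Equivalence R)
    (a : Set Sequent) (ha : InS R a) :
    ∀ (Γ : List Fm) (A B : Fm), (Γ ++ [A, A], B) ∈ a → (Γ ++ [A], B) ∈ a := by
  intro Γ A B h
  refine ha.mem_of_mem_iff (fun C => ?_) h
  simp only [List.mem_append, List.mem_cons, List.not_mem_nil, or_false, or_self]
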